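/- arXiv:2105.12715 — 7 statements merged into one kernel-verified Lean document; each statement's English description precedes it below -/
import Mathlib

section
/- Let L : X × Y → ℝ be convex in x and concave in y on a convex set Z = X × Y in a normed space. Define for r > 0 the normalized duality gap ρ_r(z) = (1/r) · sup over ẑ ∈ Z with ‖ẑ − z‖ ≤ r of (L(x, ŷ) − L(x̂, y)). Then for any fixed z ∈ Z, the map r ↦ ρ_r(z) is monotonically non-increasing on (0, ∞). -/
/-!
Write `φ(w) = L(z₁, w₂) - L(w₁, z₂)`; it is concave on `Z` and vanishes at `z`. For `0 < r ≤ s`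
the homothety `w ↦ z + (r/s)(w - z)` maps `B_s(z)` into `B_r(z)`, and concavity gives
`φ(z + (r/s)(w - z)) ≥ (r/s) φ(w)`, so `sup_{B_s} φ / s ≤ sup_{B_r} φ / r`.
-/

open Set

/-- Covers the junk value `sSup A = 0` for unbounded `A`, using `0 ∈ B`. -/
theorem Real.mul_sSup_le_sSup_of_forall_exists {A B : Set ℝ} {c : ℝ} (hc : 0 < c)
    (hBA : B ⊆ A) (hB : (0 : ℝ) ∈ B) (h : ∀ a ∈ A, ∃ b ∈ B, c * a ≤ b) :
    c * sSup A ≤ sSup B := by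
  by_cases hA : BddAbove A
  · have hB' : BddAbove B := hA.mono hBA
    rw [← le_div_iff₀' hc]
    refine csSup_le ⟨0, hBA hB⟩ fun a ha => ?_
    obtain ⟨b, hb, hab⟩ := h a ha
    rw [le_div_iff₀' hc]
    exact hab.trans (le_csSup hB' hb)
  · rw [Real.sSup_of_not_bddAbove hA, mul_zero]
    exact Real.sSup_nonneg' ⟨0, hB, le_rfl⟩

theorem concaveOn_prod_sub {E F : Type*} [AddCommGroup E] [Module ℝ E]
    [AddCommGroup F] [Module ℝ F] {X : Set E} {Y : Set F} {f : F → ℝ} {g : E → ℝ}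
    (hf : ConcaveOn ℝ Y f) (hg : ConvexOn ℝ X g) :
    ConcaveOn ℝ (X ×ˢ Y) (fun w : E × F => f w.2 - g w.1) := by
  have hconv : Convex ℝ (X ×ˢ Y) := hg.1.prod hf.1
  exact ((hf.comp_linearMap (LinearMap.snd ℝ E F)).subset (fun w hw => hw.2) hconv).sub
    ((hg.comp_linearMap (LinearMap.fst ℝ E F)).subset (fun w hw => hw.1) hconv)

section NormalizedSup

variable {V : Type*} [SeminormedAddCommGroup V] [NormedSpace ℝ V]
  {S : Set V} {φ : V → ℝ} {z : V}

theorem ConcaveOn.exists_mem_ball_mul_le (hφ : ConcaveOn ℝ S φ) (hz : z ∈ S) (hφz : φ z = 0)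
    {r s : ℝ} (hr : 0 < r) (hrs : r ≤ s) {w : V} (hw : w ∈ S) (hws : ‖w - z‖ ≤ s) :
    ∃ w' ∈ S, ‖w' - z‖ ≤ r ∧ r / s * φ w ≤ φ w' := by
  have hs : 0 < s := hr.trans_le hrs
  set a := r / s
  have ha : 0 ≤ a := by positivity
  have hb : 0 ≤ 1 - a := sub_nonneg.2 ((div_le_one hs).2 hrs)
  refine ⟨a • w + (1 - a) • z, hφ.1 hw hz ha hb (by ring), ?_, ?_⟩
  · calc ‖a • w + (1 - a) • z - z‖ = a * ‖w - z‖ := by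
          rw [show a • w + (1 - a) • z - z = a • (w - z) by module, norm_smul,
            Real.norm_of_nonneg ha]
      _ ≤ a * s := by gcongr
      _ = r := div_mul_cancel₀ r hs.ne'
  · simpa [hφz] using hφ.2 hw hz ha hb (by ring)

theorem ConcaveOn.antitoneOn_inv_mul_sSup_image_ball (hφ : ConcaveOn ℝ S φ) (hz : z ∈ S)
    (hφz : φ z = 0) :
    AntitoneOn (fun r : ℝ => (1 / r) * sSup (φ '' {w | w ∈ S ∧ ‖w - z‖ ≤ r})) (Ioi 0) := by
  intro r hr s hs hrs
  have hr : 0 < r := hr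
  have hs : 0 < s := hs
  have key : r / s * sSup (φ '' {w | w ∈ S ∧ ‖w - z‖ ≤ s}) ≤
      sSup (φ '' {w | w ∈ S ∧ ‖w - z‖ ≤ r}) := by
    refine Real.mul_sSup_le_sSup_of_forall_exists (by positivity)
      (image_mono fun w hw => ⟨hw.1, hw.2.trans hrs⟩) ⟨z, ⟨hz, by simp [hr.le]⟩, hφz⟩ ?_
    rintro _ ⟨w, ⟨hw, hws⟩, rfl⟩
    obtain ⟨w', hw', hw'r, hle⟩ := hφ.exists_mem_ball_mul_le hz hφz hr hrs hw hws
    exact ⟨φ w', ⟨w', ⟨hw', hw'r⟩, rfl⟩, hle⟩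
  calc 1 / s * sSup (φ '' {w | w ∈ S ∧ ‖w - z‖ ≤ s})
      = 1 / r * (r / s * sSup (φ '' {w | w ∈ S ∧ ‖w - z‖ ≤ s})) := by
        field_simp
    _ ≤ 1 / r * sSup (φ '' {w | w ∈ S ∧ ‖w - z‖ ≤ r}) := by gcongr

end NormalizedSup

theorem normalized_duality_gap_antitone_general
    {E F : Type*} [NormedAddCommGroup E] [NormedSpace ℝ E]
    [NormedAddCommGroup F] [NormedSpace ℝ F]
    (X : Set E) (Y : Set F)
    (L : E → F → ℝ)
    (hcvx : ∀ y ∈ Y, ConvexOn ℝ X (fun x => L x y))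
    (hccv : ∀ x ∈ X, ConcaveOn ℝ Y (fun y => L x y))
    (z : E × F) (hz : z ∈ X ×ˢ Y) :
    AntitoneOn
      (fun r : ℝ => (1 / r) *
        sSup ((fun w : E × F => L z.1 w.2 - L w.1 z.2) ''
          {w | w ∈ X ×ˢ Y ∧ ‖w - z‖ ≤ r}))
      (Set.Ioi (0 : ℝ)) :=
  (concaveOn_prod_sub (hccv z.1 hz.1) (hcvx z.2 hz.2)).antitoneOn_inv_mul_sSup_image_ball hz
    (sub_self _)

/-- For a convex-concave function `L` on `Z = X ×ˢ Y`, the normalized duality gap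
`ρ_r(z) = (1/r) · sup { L(x, ŷ) − L(x̂, y) : ẑ ∈ Z, ‖ẑ − z‖ ≤ r }` is monotonically
non-increasing in `r` on `(0, ∞)` for every fixed `z ∈ Z`. -/
theorem normalized_duality_gap_antitone
    {E F : Type*} [NormedAddCommGroup E] [NormedSpace ℝ E]
    [NormedAddCommGroup F] [NormedSpace ℝ F]
    (X : Set E) (Y : Set F) (hX : Convex ℝ X) (hY : Convex ℝ Y)
    (L : E → F → ℝ)
    (hcvx : ∀ y ∈ Y, ConvexOn ℝ X (fun x => L x y))
    (hccv : ∀ x ∈ X, ConcaveOn ℝ Y (fun y => L x y))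
    (z : E × F) (hz : z ∈ X ×ˢ Y) :
    AntitoneOn
      (fun r : ℝ => (1 / r) *
        sSup ((fun w : E × F => L z.1 w.2 - L w.1 z.2) ''
          {w | w ∈ X ×ˢ Y ∧ ‖w - z‖ ≤ r}))
      (Set.Ioi (0 : ℝ)) :=
  normalized_duality_gap_antitone_general X Y L hcvx hccv z hz
end

section
/- Consider the bilinear saddle-point problem min_x max_y L(x,y) = cᵀx − yᵀAx + bᵀy over Z = ℝⁿ × ℝᵐ (Euclidean norm), and suppose the solution set Z* = {z = (x,y) : Ax = b, Aᵀy = c}, i.e. the set of z with F(z) = 0, is nonempty, where F(z) = (c − Aᵀy, Ax − b). Then for every z ∈ Z and every r > 0, ρ_r(z) = ‖F(z)‖₂ and ρ_r(z) ≥ σ_min⁺(A)·dist(z, Z*). That is, the bilinear problem is σ_min⁺(A)-sharp. -/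
open scoped RealInnerProductSpace Matrix

/-- The minimum nonzero singular value of a real matrix `A`. -/
noncomputable def sigmaMinPos {m n : Type*} [Fintype m] [Fintype n] [DecidableEq n]
    (H : Matrix m n ℝ) : ℝ :=
  Real.sqrt (sInf {μ : ℝ | μ ≠ 0 ∧
    ∃ i, (show (Hᵀ * H).IsHermitian by
      simpa using Matrix.isHermitian_conjTranspose_mul_self H).eigenvalues i = μ})

lemma Matrix.isHermitian_transpose_mul_self {m n : Type*} [Fintype m]
    (A : Matrix m n ℝ) : (Aᵀ * A).IsHermitian := by
  simpa using Matrix.isHermitian_conjTranspose_mul_self A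

/-- The primal-dual space `ℝⁿ × ℝᵐ` equipped with the Euclidean (ℓ²-product) norm. -/
abbrev PDSpace (n m : ℕ) :=
  WithLp 2 (EuclideanSpace ℝ (Fin n) × EuclideanSpace ℝ (Fin m))

/-- Primal component of a primal-dual point. -/
def xPart {n m : ℕ} (z : PDSpace n m) : EuclideanSpace ℝ (Fin n) :=
  ((WithLp.equiv 2 _) z).1

/-- Dual component of a primal-dual point. -/
def yPart {n m : ℕ} (z : PDSpace n m) : EuclideanSpace ℝ (Fin m) :=
  ((WithLp.equiv 2 _) z).2

/-- For `v` orthogonal to the kernel of `A`, `‖A v‖ ≥ σ_min⁺(A) ‖v‖`. -/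
lemma norm_toEuclideanLin_ge {m n : ℕ} (A : Matrix (Fin m) (Fin n) ℝ)
    (v : EuclideanSpace ℝ (Fin n))
    (hv : v ∈ (LinearMap.ker (Matrix.toEuclideanLin A))ᗮ) :
    sigmaMinPos A * ‖v‖ ≤ ‖Matrix.toEuclideanLin A v‖ := by
  classical
  set hB := Matrix.isHermitian_transpose_mul_self A with hBdef
  set e := hB.eigenvectorBasis with hedef
  set lam := hB.eigenvalues with hlamdef
  set T := Matrix.toEuclideanLin A with hTdef
  set S : Set ℝ := {μ : ℝ | μ ≠ 0 ∧ ∃ i, lam i = μ} with hSdef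
  have hlam_nonneg : ∀ i, 0 ≤ lam i := Matrix.eigenvalues_conjTranspose_mul_self_nonneg A
  have hlmin_nonneg : 0 ≤ sInf S := Real.sInf_nonneg fun μ hμ => by
    obtain ⟨_, i, rfl⟩ := hμ; exact hlam_nonneg i
  have hbdd : BddBelow S := ⟨0, fun μ hμ => by obtain ⟨_, i, rfl⟩ := hμ; exact hlam_nonneg i⟩
  have hSact : ∀ i, Matrix.toEuclideanLin (Aᴴ * A) (e i) = lam i • e i := by
    intro i
    have h := hB.mulVec_eigenvectorBasis i
    apply (WithLp.equiv 2 _).injective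
    funext j
    exact congrFun h j
  have hcomp : ∀ w : EuclideanSpace ℝ (Fin n),
      Matrix.toEuclideanLin (Aᴴ * A) w = Matrix.toEuclideanLin Aᴴ (T w) := by
    intro w
    apply (WithLp.equiv 2 _).injective
    funext j
    exact (congrFun (Matrix.mulVec_mulVec ((WithLp.equiv 2 _) w) Aᴴ A) j).symm
  have hfact : ∀ w : EuclideanSpace ℝ (Fin n),
      ⟪w, Matrix.toEuclideanLin (Aᴴ * A) w⟫ = ‖T w‖ ^ 2 := by
    intro w
    rw [hcomp w, Matrix.toEuclideanLin_conjTranspose_eq_adjoint,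
      LinearMap.adjoint_inner_right, real_inner_self_eq_norm_sq, hTdef]
  have hSym : (Matrix.toEuclideanLin (Aᴴ * A)).IsSymmetric :=
    Matrix.isHermitian_iff_isSymmetric.mp hB
  have hcoef0 : ∀ i, lam i = 0 → ⟪e i, v⟫ = 0 := by
    intro i hi
    have hker : e i ∈ LinearMap.ker T := by
      rw [LinearMap.mem_ker, ← norm_eq_zero]
      have h0 : ‖T (e i)‖ ^ 2 = 0 := by
        rw [← hfact (e i), hSact i, hi]; simp
      exact pow_eq_zero_iff (by norm_num) |>.mp h0
    exact (Submodule.mem_orthogonal _ v).mp hv (e i) hker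
  have h1 : ‖T v‖ ^ 2 = ∑ i, lam i * ⟪e i, v⟫ ^ 2 := by
    rw [← hfact v, ← e.sum_inner_mul_inner v (Matrix.toEuclideanLin (Aᴴ * A) v)]
    refine Finset.sum_congr rfl fun i _ => ?_
    have : ⟪e i, Matrix.toEuclideanLin (Aᴴ * A) v⟫
        = lam i * ⟪e i, v⟫ := by
      rw [← hSym (e i) v, hSact i, inner_smul_left]
      simp [real_inner_comm]
    rw [this, real_inner_comm v (e i)]; ring
  have h2 : ‖v‖ ^ 2 = ∑ i, ⟪e i, v⟫ ^ 2 := by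
    rw [← real_inner_self_eq_norm_sq, ← e.sum_inner_mul_inner v v]
    refine Finset.sum_congr rfl fun i _ => ?_
    rw [real_inner_comm v (e i)]; ring
  have key : sInf S * ‖v‖ ^ 2 ≤ ‖T v‖ ^ 2 := by
    rw [h1, h2, Finset.mul_sum]
    refine Finset.sum_le_sum fun i _ => ?_
    by_cases hlz : lam i = 0
    · rw [hcoef0 i hlz]; simp
    · exact mul_le_mul_of_nonneg_right (csInf_le hbdd ⟨hlz, i, rfl⟩) (sq_nonneg _)
  have : sigmaMinPos A * ‖v‖ = Real.sqrt (sInf S * ‖v‖ ^ 2) := by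
    rw [Real.sqrt_mul hlmin_nonneg, Real.sqrt_sq (norm_nonneg _)]
    rfl
  rw [this]
  calc Real.sqrt (sInf S * ‖v‖ ^ 2) ≤ Real.sqrt (‖T v‖ ^ 2) := Real.sqrt_le_sqrt key
    _ = ‖T v‖ := Real.sqrt_sq (norm_nonneg _)

/-- `μ` is listed among the eigenvalues of a Hermitian matrix iff it has an eigenvector. -/
lemma eig_iff_of_hermitian {n : ℕ} (B : Matrix (Fin n) (Fin n) ℝ) (hB : B.IsHermitian)
    (μ : ℝ) : (∃ i, hB.eigenvalues i = μ) ↔ ∃ v : Fin n → ℝ, v ≠ 0 ∧ B *ᵥ v = μ • v := by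
  constructor
  · rintro ⟨i, rfl⟩
    refine ⟨hB.eigenvectorBasis i, ?_, hB.mulVec_eigenvectorBasis i⟩
    intro h
    apply hB.eigenvectorBasis.orthonormal.ne_zero i
    apply (WithLp.equiv 2 _).injective
    funext j
    exact congrFun h j
  · rintro ⟨v, hv0, hv⟩
    by_contra hno
    push_neg at hno
    apply hv0
    set w : EuclideanSpace ℝ (Fin n) := (WithLp.equiv 2 _).symm v with hw
    have hSym : (Matrix.toEuclideanLin B).IsSymmetric :=
      Matrix.isHermitian_iff_isSymmetric.mp hB
    have hSact : ∀ i, Matrix.toEuclideanLin B (hB.eigenvectorBasis i)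
        = hB.eigenvalues i • hB.eigenvectorBasis i := by
      intro i
      apply (WithLp.equiv 2 _).injective
      funext j
      exact congrFun (hB.mulVec_eigenvectorBasis i) j
    have hBw : Matrix.toEuclideanLin B w = μ • w := by
      apply (WithLp.equiv 2 _).injective
      funext j
      exact congrFun hv j
    have hco : ∀ i, ⟪hB.eigenvectorBasis i, w⟫ = 0 := by
      intro i
      have h1 : hB.eigenvalues i * ⟪hB.eigenvectorBasis i, w⟫
          = μ * ⟪hB.eigenvectorBasis i, w⟫ := by
        have := hSym (hB.eigenvectorBasis i) w
        rw [hSact i, hBw, inner_smul_left, inner_smul_right] at this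
        simpa using this
      have : (hB.eigenvalues i - μ) * ⟪hB.eigenvectorBasis i, w⟫ = 0 := by linarith
      rcases mul_eq_zero.mp this with h | h
      · exact absurd (by linarith : hB.eigenvalues i = μ) (hno i)
      · exact h
    have hw0 : w = 0 := by
      rw [← hB.eigenvectorBasis.sum_repr' w]
      apply Finset.sum_eq_zero
      intro i _
      rw [hco i, zero_smul]
    rw [hw] at hw0
    exact (WithLp.equiv 2 _).symm.injective (by simpa using hw0)

/-- The minimum nonzero singular value is invariant under transposition. -/
lemma sigmaMinPos_transpose {m n : ℕ} (A : Matrix (Fin m) (Fin n) ℝ) :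
    sigmaMinPos Aᵀ = sigmaMinPos A := by
  unfold sigmaMinPos
  congr 1
  apply congrArg
  ext μ
  simp only [Set.mem_setOf_eq]
  have hTT : (Aᵀ)ᴴ * Aᵀ = A * Aᵀ := by
    rw [Matrix.conjTranspose_eq_transpose_of_trivial, Matrix.transpose_transpose]
  constructor
  · rintro ⟨hμ, hex⟩
    refine ⟨hμ, ?_⟩
    rw [eig_iff_of_hermitian _ (Matrix.isHermitian_transpose_mul_self Aᵀ)] at hex
    rw [eig_iff_of_hermitian _ (Matrix.isHermitian_transpose_mul_self A)]
    obtain ⟨v, hv0, hv⟩ := hex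
    rw [Matrix.transpose_transpose] at hv
    refine ⟨Aᵀ *ᵥ v, ?_, ?_⟩
    · intro h
      apply hv0
      have : (A * Aᵀ) *ᵥ v = 0 := by rw [← Matrix.mulVec_mulVec, h, Matrix.mulVec_zero]
      rw [hv] at this
      have := smul_eq_zero.mp this
      tauto
    · have h1 : (Aᵀ * A) *ᵥ (Aᵀ *ᵥ v) = Aᵀ *ᵥ ((A * Aᵀ) *ᵥ v) := by
        rw [Matrix.mulVec_mulVec,
          Matrix.mulVec_mulVec, Matrix.mul_assoc]
      rw [h1, hv, Matrix.mulVec_smul]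
  · rintro ⟨hμ, hex⟩
    refine ⟨hμ, ?_⟩
    rw [eig_iff_of_hermitian _ (Matrix.isHermitian_transpose_mul_self A)] at hex
    rw [eig_iff_of_hermitian _ (Matrix.isHermitian_transpose_mul_self Aᵀ)]
    obtain ⟨v, hv0, hv⟩ := hex
    refine ⟨A *ᵥ v, ?_, ?_⟩
    · intro h
      apply hv0
      have : (Aᵀ * A) *ᵥ v = 0 := by rw [← Matrix.mulVec_mulVec, h, Matrix.mulVec_zero]
      rw [hv] at this
      have := smul_eq_zero.mp this
      tauto
    · rw [Matrix.transpose_transpose]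
      have h1 : (A * Aᵀ) *ᵥ (A *ᵥ v) = A *ᵥ ((Aᵀ * A) *ᵥ v) := by
        rw [Matrix.mulVec_mulVec, Matrix.mulVec_mulVec, Matrix.mul_assoc]
      rw [h1, hv, Matrix.mulVec_smul]

/-- Projection onto the affine solution set of a linear equation, with error bound. -/
lemma exists_near {E F : Type*} [NormedAddCommGroup E] [InnerProductSpace ℝ E]
    [NormedAddCommGroup F] [InnerProductSpace ℝ F] [FiniteDimensional ℝ E]
    (T : E →ₗ[ℝ] F) (σ : ℝ)
    (hσ : ∀ p ∈ (LinearMap.ker T)ᗮ, σ * ‖p‖ ≤ ‖T p‖) (x x0 : E) :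
    ∃ xs : E, T xs = T x0 ∧ σ * ‖x - xs‖ ≤ ‖T x - T x0‖ := by
  set K := LinearMap.ker T
  set q : E := (Submodule.orthogonalProjectionOnto K (x - x0) : E)
  have hqK : q ∈ K := (Submodule.orthogonalProjectionOnto K (x - x0)).2
  set p : E := (x - x0) - q with hp
  have hpK : p ∈ Kᗮ := Submodule.sub_starProjection_mem_orthogonal (K := K) (x - x0)
  have hTq : T q = 0 := hqK
  have hTp : T p = T x - T x0 := by
    rw [hp, map_sub, map_sub, hTq, sub_zero]
  refine ⟨x - p, ?_, ?_⟩
  · rw [map_sub, hTp]; abel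
  · rw [← hTp]
    have : x - (x - p) = p := by abel
    rw [this]
    exact hσ p hpK

/-- For the bilinear saddle-point problem `L(x,y) = cᵀx − yᵀAx + bᵀy` on
`ℝⁿ × ℝᵐ` (Euclidean norm), with `F(z) = (c − Aᵀy, Ax − b)` and nonempty solution set
`Z* = {z : F(z) = 0}`, for every `z` and `r > 0` the normalized duality gap satisfies
`ρ_r(z) = ‖F(z)‖₂` and `ρ_r(z) ≥ σ_min⁺(A) · dist(z, Z*)`. -/
theorem bilinear_problem_is_sharp {n m : ℕ} (A : Matrix (Fin m) (Fin n) ℝ)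
    (b : EuclideanSpace ℝ (Fin m)) (c : EuclideanSpace ℝ (Fin n))
    (L : EuclideanSpace ℝ (Fin n) → EuclideanSpace ℝ (Fin m) → ℝ)
    (hL : ∀ x y, L x y = ⟪c, x⟫ - ⟪y, Matrix.toEuclideanLin A x⟫ + ⟪b, y⟫)
    (F : PDSpace n m → PDSpace n m)
    (hF : ∀ z, F z = (WithLp.equiv 2 _).symm
      (c - Matrix.toEuclideanLin Aᵀ (yPart z), Matrix.toEuclideanLin A (xPart z) - b))
    (Zstar : Set (PDSpace n m)) (hZstar : Zstar = {z | F z = 0}) (hne : Zstar.Nonempty)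
    (z : PDSpace n m) (r : ℝ) (hr : 0 < r) :
    (1 / r) * sSup ((fun w : PDSpace n m => L (xPart z) (yPart w) - L (xPart w) (yPart z)) ''
        {w | ‖w - z‖ ≤ r}) = ‖F z‖ ∧
    sigmaMinPos A * Metric.infDist z Zstar ≤
      (1 / r) * sSup ((fun w : PDSpace n m => L (xPart z) (yPart w) - L (xPart w) (yPart z)) ''
        {w | ‖w - z‖ ≤ r}) := by
  set T := Matrix.toEuclideanLin A with hT
  set Tt := Matrix.toEuclideanLin Aᵀ with hTtdef
  have hadj : ∀ (y : EuclideanSpace ℝ (Fin m)) (u : EuclideanSpace ℝ (Fin n)),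
      ⟪Tt y, u⟫ = ⟪y, T u⟫ := fun y u => by
    rw [hTtdef, hT, ← Matrix.conjTranspose_eq_transpose_of_trivial,
      Matrix.toEuclideanLin_conjTranspose_eq_adjoint, LinearMap.adjoint_inner_left]
  have hgap : ∀ w : PDSpace n m,
      L (xPart z) (yPart w) - L (xPart w) (yPart z) = ⟪F z, z - w⟫ := by
    intro w
    have hFz : ⟪F z, z - w⟫ = ⟪c - Tt (yPart z), xPart z - xPart w⟫
        + ⟪T (xPart z) - b, yPart z - yPart w⟫ := by
      rw [hF z]; rfl
    rw [hFz, hL, hL]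
    rw [inner_sub_left, inner_sub_left, inner_sub_right, inner_sub_right,
        inner_sub_right, inner_sub_right, hadj, hadj]
    have c1 : ⟪yPart w, T (xPart z)⟫ = ⟪T (xPart z), yPart w⟫ := real_inner_comm _ _
    have c2 : ⟪yPart z, T (xPart z)⟫ = ⟪T (xPart z), yPart z⟫ := real_inner_comm _ _
    have c3 : ⟪b, yPart w⟫ = ⟪yPart w, b⟫ := real_inner_comm _ _
    have c4 : ⟪b, yPart z⟫ = ⟪yPart z, b⟫ := real_inner_comm _ _
    linarith
  have hfun : (fun w : PDSpace n m => L (xPart z) (yPart w) - L (xPart w) (yPart z))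
      = fun w : PDSpace n m => ⟪F z, z - w⟫ := funext hgap
  have hgreat : IsGreatest ((fun w : PDSpace n m => ⟪F z, z - w⟫) '' {w | ‖w - z‖ ≤ r})
      (r * ‖F z‖) := by
    constructor
    · by_cases hg : F z = 0
      · exact ⟨z, by simp [hr.le], by simp [hg]⟩
      · refine ⟨z - (r / ‖F z‖) • F z, ?_, ?_⟩
        · simp only [Set.mem_setOf_eq]
          have h : z - (r / ‖F z‖) • F z - z = -((r / ‖F z‖) • F z) := by abel
          rw [h, norm_neg, norm_smul, Real.norm_eq_abs,
            abs_of_nonneg (div_nonneg hr.le (norm_nonneg _)),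
            div_mul_cancel₀ _ (norm_ne_zero_iff.mpr hg)]
        · show ⟪F z, z - (z - (r / ‖F z‖) • F z)⟫ = r * ‖F z‖
          have h : z - (z - (r / ‖F z‖) • F z) = (r / ‖F z‖) • F z := by abel
          rw [h, inner_smul_right, real_inner_self_eq_norm_sq]
          rw [div_mul_eq_mul_div, mul_div_assoc, pow_two,
            mul_div_assoc, div_self (norm_ne_zero_iff.mpr hg), mul_one]
    · rintro t ⟨w, hw, rfl⟩
      calc ⟪F z, z - w⟫ ≤ ‖F z‖ * ‖z - w‖ := real_inner_le_norm _ _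
        _ ≤ ‖F z‖ * r := by
            refine mul_le_mul_of_nonneg_left ?_ (norm_nonneg _)
            rw [norm_sub_rev]; exact hw
        _ = r * ‖F z‖ := mul_comm _ _
  have hsup : (1 / r) * sSup ((fun w : PDSpace n m =>
      L (xPart z) (yPart w) - L (xPart w) (yPart z)) '' {w | ‖w - z‖ ≤ r}) = ‖F z‖ := by
    rw [hfun, hgreat.csSup_eq]
    field_simp
  refine ⟨hsup, ?_⟩
  rw [hsup]
  obtain ⟨z0, hz0⟩ := hne
  rw [hZstar] at hz0
  have h0 : c - Tt (yPart z0) = 0 ∧ T (xPart z0) - b = 0 := by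
    have h := (hF z0).symm.trans hz0
    have h2 := congrArg (WithLp.equiv 2 _) h
    simp only [Equiv.apply_symm_apply] at h2
    exact ⟨congrArg Prod.fst h2, congrArg Prod.snd h2⟩
  have hTx0 : T (xPart z0) = b := by
    have := h0.2; rwa [sub_eq_zero] at this
  have hTty0 : Tt (yPart z0) = c := by
    have := h0.1; rw [sub_eq_zero] at this; exact this.symm
  have hσ0 : 0 ≤ sigmaMinPos A := Real.sqrt_nonneg _
  obtain ⟨xs, hxs1, hxs2⟩ := exists_near T (sigmaMinPos A)
    (fun p hp => norm_toEuclideanLin_ge A p hp) (xPart z) (xPart z0)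
  obtain ⟨ys, hys1, hys2⟩ := exists_near Tt (sigmaMinPos A)
    (fun p hp => by rw [← sigmaMinPos_transpose A]; exact norm_toEuclideanLin_ge Aᵀ p hp)
    (yPart z) (yPart z0)
  set zs : PDSpace n m := (WithLp.equiv 2 _).symm (xs, ys) with hzs
  have hzsZ : zs ∈ Zstar := by
    rw [hZstar]
    show F zs = 0
    rw [hF]
    have hx : xPart zs = xs := rfl
    have hy : yPart zs = ys := rfl
    rw [hx, hy, hys1, hxs1, hTty0, hTx0]
    simp
  have hinf : Metric.infDist z Zstar ≤ ‖z - zs‖ := by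
    rw [← dist_eq_norm]
    exact Metric.infDist_le_dist_of_mem hzsZ
  have hkey : sigmaMinPos A * ‖z - zs‖ ≤ ‖F z‖ := by
    have hzsub : ‖z - zs‖ ^ 2 = ‖xPart z - xs‖ ^ 2 + ‖yPart z - ys‖ ^ 2 := by
      rw [WithLp.prod_norm_sq_eq_of_L2]
      rfl
    have hFnorm : ‖F z‖ ^ 2 = ‖c - Tt (yPart z)‖ ^ 2 + ‖T (xPart z) - b‖ ^ 2 := by
      rw [hF z, WithLp.prod_norm_sq_eq_of_L2]
      rfl
    have hx2 : (sigmaMinPos A * ‖xPart z - xs‖) ^ 2 ≤ ‖T (xPart z) - b‖ ^ 2 := by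
      apply pow_le_pow_left₀ (mul_nonneg hσ0 (norm_nonneg _))
      rw [← hTx0]
      exact hxs2
    have hy2 : (sigmaMinPos A * ‖yPart z - ys‖) ^ 2 ≤ ‖c - Tt (yPart z)‖ ^ 2 := by
      apply pow_le_pow_left₀ (mul_nonneg hσ0 (norm_nonneg _))
      rw [norm_sub_rev c, ← hTty0]
      exact hys2
    have hsq : (sigmaMinPos A * ‖z - zs‖) ^ 2 ≤ ‖F z‖ ^ 2 := by
      rw [mul_pow, hzsub, hFnorm]
      calc sigmaMinPos A ^ 2 * (‖xPart z - xs‖ ^ 2 + ‖yPart z - ys‖ ^ 2)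
          = (sigmaMinPos A * ‖xPart z - xs‖) ^ 2
            + (sigmaMinPos A * ‖yPart z - ys‖) ^ 2 := by ring
        _ ≤ ‖c - Tt (yPart z)‖ ^ 2 + ‖T (xPart z) - b‖ ^ 2 := by
            have := add_le_add hy2 hx2
            linarith
    have := Real.sqrt_le_sqrt hsq
    rwa [Real.sqrt_sq (mul_nonneg hσ0 (norm_nonneg _)),
      Real.sqrt_sq (norm_nonneg _)] at this
  calc sigmaMinPos A * Metric.infDist z Zstar
      ≤ sigmaMinPos A * ‖z - zs‖ := mul_le_mul_of_nonneg_left hinf hσ0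
    _ ≤ ‖F z‖ := hkey
end

section
/- Under Properties 1 and 2, the average iterate satisfies the normalized duality gap bound ρ_r(z̄^t) ≤ 2C·r/t with r = ‖z̄^t − z^0‖ (when r > 0), where ρ_r(z) = (1/r)·max_{ẑ ∈ Z, ‖ẑ−z‖ ≤ r} (L(x,ŷ) − L(x̂,y)). -/
/-!
Fix `w` in the ball of radius `r = p (z̄ - z⁰)` around `z̄`. Convex-concavity makes
`z ↦ L z.1 w.2 - L w.1 z.2` convex, so its value at the average `z̄` of the target iterates is
at most the average of its values there; summing Property 1 telescopes that average to at most
`C p (w - z⁰)² / (2t)`. By the triangle inequality `p (w - z⁰) ≤ 2r`, so every gap in the ball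
is at most `2Cr²/t`, and dividing by `r` gives the bound.
-/

open Set Finset

section

variable {E F : Type*} [AddCommGroup E] [Module ℝ E] [AddCommGroup F] [Module ℝ F]

def dualityGap (L : E → F → ℝ) (z w : E × F) : ℝ := L z.1 w.2 - L w.1 z.2

theorem convexOn_dualityGap {X : Set E} {Y : Set F} {L : E → F → ℝ} {w : E × F}
    (hcvx : ConvexOn ℝ X (fun x => L x w.2)) (hccv : ConcaveOn ℝ Y (fun y => L w.1 y)) :
    ConvexOn ℝ (X ×ˢ Y) (fun z => dualityGap L z w) := by
  have hXY : Convex ℝ (X ×ˢ Y) := hcvx.1.prod hccv.1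
  exact
    ((hcvx.comp_linearMap (LinearMap.fst ℝ E F)).subset (prod_subset_preimage_fst X Y) hXY).sub
      ((hccv.comp_linearMap (LinearMap.snd ℝ E F)).subset (prod_subset_preimage_snd X Y) hXY)

theorem Finset.sum_range_le_of_le_sub_succ {g a : ℕ → ℝ} {t : ℕ}
    (h : ∀ i < t, g i ≤ a i - a (i + 1)) (ha : 0 ≤ a t) :
    ∑ i ∈ range t, g i ≤ a 0 := by
  calc ∑ i ∈ range t, g i ≤ ∑ i ∈ range t, (a i - a (i + 1)) :=
        sum_le_sum fun i hi => h i (mem_range.1 hi)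
    _ = a 0 - a t := sum_range_sub' a t
    _ ≤ a 0 := sub_le_self _ ha

theorem dualityGap_average_le (p : Seminorm ℝ (E × F)) {X : Set E} {Y : Set F}
    {L : E → F → ℝ} {w : E × F} (hcvx : ConvexOn ℝ X (fun x => L x w.2))
    (hccv : ConcaveOn ℝ Y (fun y => L w.1 y)) {zseq zhat : ℕ → E × F}
    (hzhmem : ∀ t, zhat t ∈ X ×ˢ Y) {C : ℝ} (hC : 0 ≤ C)
    (hdecay : ∀ i, dualityGap L (zhat (i + 1)) w ≤
      C / 2 * p (w - zseq i) ^ 2 - C / 2 * p (w - zseq (i + 1)) ^ 2)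
    {t : ℕ} (ht : 0 < t) :
    dualityGap L ((t : ℝ)⁻¹ • ∑ i ∈ range t, zhat (i + 1)) w ≤
      C / 2 * p (w - zseq 0) ^ 2 / t := by
  have hweights : ∑ _i ∈ range t, (t : ℝ)⁻¹ = 1 := by
    rw [sum_const, card_range, nsmul_eq_mul, mul_inv_cancel₀ (by positivity)]
  have hjensen := (convexOn_dualityGap hcvx hccv).map_sum_le
    (fun _ _ => by positivity) hweights fun i _ => hzhmem (i + 1)
  have htelescope : ∑ i ∈ range t, dualityGap L (zhat (i + 1)) w ≤ C / 2 * p (w - zseq 0) ^ 2 :=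
    sum_range_le_of_le_sub_succ (fun i _ => hdecay i) (by positivity)
  calc dualityGap L ((t : ℝ)⁻¹ • ∑ i ∈ range t, zhat (i + 1)) w
      ≤ ∑ i ∈ range t, (t : ℝ)⁻¹ • dualityGap L (zhat (i + 1)) w := by
        rwa [smul_sum]
    _ = (∑ i ∈ range t, dualityGap L (zhat (i + 1)) w) / t := by
        simp only [smul_eq_mul, inv_mul_eq_div, sum_div]
    _ ≤ C / 2 * p (w - zseq 0) ^ 2 / t := by gcongr

end

theorem average_iterate_normalized_gap_bound_general
    {E F : Type*} [AddCommGroup E] [Module ℝ E] [AddCommGroup F] [Module ℝ F]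
    (p : Seminorm ℝ (E × F)) (X : Set E) (Y : Set F)
    (L : E → F → ℝ)
    (hcvx : ∀ y ∈ Y, ConvexOn ℝ X (fun x => L x y))
    (hccv : ∀ x ∈ X, ConcaveOn ℝ Y (fun y => L x y))
    (zseq zhat : ℕ → E × F)
    (hzhmem : ∀ t, zhat t ∈ X ×ˢ Y)
    (C : ℝ) (hC : 0 < C)
    (hprop1 : ∀ t : ℕ, ∀ z ∈ X ×ˢ Y,
      L (zhat (t + 1)).1 z.2 - L z.1 (zhat (t + 1)).2 ≤
        C / 2 * p (z - zseq t) ^ 2 - C / 2 * p (z - zseq (t + 1)) ^ 2) :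
    ∀ t : ℕ, 1 ≤ t → ∀ zbar : E × F,
      zbar = (t : ℝ)⁻¹ • ∑ i ∈ Finset.range t, zhat (i + 1) →
      0 < p (zbar - zseq 0) →
      (1 / p (zbar - zseq 0)) *
          sSup ((fun w : E × F => L zbar.1 w.2 - L w.1 zbar.2) ''
            {w | w ∈ X ×ˢ Y ∧ p (w - zbar) ≤ p (zbar - zseq 0)}) ≤
        2 * C * p (zbar - zseq 0) / t := by
  intro t ht zbar hzbar hr
  set r := p (zbar - zseq 0)
  have hgap : ∀ w ∈ {w | w ∈ X ×ˢ Y ∧ p (w - zbar) ≤ r},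
      dualityGap L zbar w ≤ 2 * C * r ^ 2 / t := by
    rintro w ⟨hw, hwr⟩
    have hfar : p (w - zseq 0) ≤ 2 * r := by linarith [le_map_sub_add_map_sub p w zbar (zseq 0)]
    calc dualityGap L zbar w ≤ C / 2 * p (w - zseq 0) ^ 2 / t :=
          hzbar ▸ dualityGap_average_le p (hcvx w.2 hw.2) (hccv w.1 hw.1) hzhmem hC.le
            (fun i => hprop1 i w hw) ht
      _ ≤ C / 2 * (2 * r) ^ 2 / t := by gcongr
      _ = 2 * C * r ^ 2 / t := by ring
  have hsup : sSup ((fun w : E × F => L zbar.1 w.2 - L w.1 zbar.2) ''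
      {w | w ∈ X ×ˢ Y ∧ p (w - zbar) ≤ r}) ≤ 2 * C * r ^ 2 / t :=
    Real.sSup_le (by rintro _ ⟨w, hw, rfl⟩; exact hgap w hw) (by positivity)
  calc 1 / r * sSup _ ≤ 1 / r * (2 * C * r ^ 2 / t) := by gcongr
    _ = 2 * C * r / t := by field_simp

/-- Under Properties 1 and 2 (and convex-concavity of `L`), the average iterate
`z̄^t` satisfies the normalized duality gap bound `ρ_r(z̄^t) ≤ 2C·r/t` with
`r = ‖z̄^t − z^0‖ > 0`, where
`ρ_r(z) = (1/r)·sup { L(x,ŷ) − L(x̂,y) : ẑ ∈ Z, ‖ẑ − z‖ ≤ r }` (semi-norm `p`). -/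
theorem average_iterate_normalized_gap_bound
    {E F : Type*} [AddCommGroup E] [Module ℝ E] [AddCommGroup F] [Module ℝ F]
    (p : Seminorm ℝ (E × F)) (X : Set E) (Y : Set F)
    (hXc : Convex ℝ X) (hYc : Convex ℝ Y) (L : E → F → ℝ)
    (hcvx : ∀ y ∈ Y, ConvexOn ℝ X (fun x => L x y))
    (hccv : ∀ x ∈ X, ConcaveOn ℝ Y (fun y => L x y))
    (zseq zhat : ℕ → E × F)
    (hzmem : ∀ t, zseq t ∈ X ×ˢ Y) (hzhmem : ∀ t, zhat t ∈ X ×ˢ Y)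
    (C : ℝ) (hC : 0 < C)
    (hprop1 : ∀ t : ℕ, ∀ z ∈ X ×ˢ Y,
      L (zhat (t + 1)).1 z.2 - L z.1 (zhat (t + 1)).2 ≤
        C / 2 * p (z - zseq t) ^ 2 - C / 2 * p (z - zseq (t + 1)) ^ 2)
    (Zstar : Set (E × F)) (hne : Zstar.Nonempty) (hZsub : Zstar ⊆ X ×ˢ Y)
    (hZsaddle : ∀ zs ∈ Zstar, ∀ z ∈ X ×ˢ Y,
      L zs.1 z.2 ≤ L zs.1 zs.2 ∧ L zs.1 zs.2 ≤ L z.1 zs.2)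
    (q : ℝ) (hq : 0 ≤ q)
    (hprop2 : ∀ t : ℕ,
      p (zhat (t + 1) - zseq (t + 1)) ≤
          q * sInf ((fun w => p (zseq (t + 1) - w)) '' Zstar) ∨
        p (zhat (t + 1) - zseq t) ≤ q * sInf ((fun w => p (zseq t - w)) '' Zstar)) :
    ∀ t : ℕ, 1 ≤ t → ∀ zbar : E × F,
      zbar = (t : ℝ)⁻¹ • ∑ i ∈ Finset.range t, zhat (i + 1) →
      0 < p (zbar - zseq 0) →
      (1 / p (zbar - zseq 0)) *
          sSup ((fun w : E × F => L zbar.1 w.2 - L w.1 zbar.2) ''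
            {w | w ∈ X ×ˢ Y ∧ p (w - zbar) ≤ p (zbar - zseq 0)}) ≤
        2 * C * p (zbar - zseq 0) / t :=
  average_iterate_normalized_gap_bound_general p X Y L hcvx hccv zseq zhat hzhmem C hC hprop1
end

section
/- Adaptive restart bound on restart length: suppose ρ_{‖z̄^{n,t} − z^{n,0}‖}(z̄^{n,t}) ≤ 2C‖z̄^{n,t} − z^{n,0}‖/t, ‖z̄^{n,t} − z^{n,0}‖ ≤ (q+2)·dist(z^{n,0}, Z*), and α·dist(z^{n,0}, Z*) ≤ ρ_{‖z^{n,0} − z^{n−1,0}‖}(z^{n,0}) (sharpness at the restart point). If t* = ⌈2C(q+2)/(αβ)⌉, then at t = t* the adaptive restart condition ρ_{‖z̄^{n,t*} − z^{n,0}‖}(z̄^{n,t*}) ≤ β·ρ_{‖z^{n,0} − z^{n−1,0}‖}(z^{n,0}) holds; consequently the adaptive restart length τₙ satisfies τₙ ≤ t*. -/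
/-! The restart condition follows from the chain
`ρ(z̄) ≤ 2C r / t ≤ 2C (q+2) D / t ≤ α β D ≤ β ρ_prev`, whose third step is exactly
`t ≥ 2C(q+2)/(αβ)`. The ceiling `t*` satisfies this and is positive, so the rate bound applies
at `t*`; minimality of `τₙ` then gives `τₙ ≤ t*`. -/

theorem restart_condition_of_length_le {C q α β D ρprev ρ r t : ℝ}
    (hC : 0 ≤ C) (hα : 0 < α) (hβ : 0 < β) (hD : 0 ≤ D) (ht : 0 < t)
    (hρ : ρ ≤ 2 * C * r / t) (hr : r ≤ (q + 2) * D) (hsharp : α * D ≤ ρprev)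
    (hlen : 2 * C * (q + 2) / (α * β) ≤ t) :
    ρ ≤ β * ρprev := by
  have hrate : 2 * C * (q + 2) / t ≤ α * β :=
    (div_le_comm₀ (by positivity) ht).mp hlen
  calc ρ ≤ 2 * C * r / t := hρ
    _ ≤ 2 * C * ((q + 2) * D) / t := by gcongr
    _ = 2 * C * (q + 2) / t * D := by ring
    _ ≤ α * β * D := by gcongr
    _ = β * (α * D) := by ring
    _ ≤ β * ρprev := by gcongr

theorem adaptive_restart_length_bound_general
    (C q α β D ρprev : ℝ) (hC : 0 < C) (hq : 0 ≤ q) (hα : 0 < α)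
    (hβ : β ∈ Set.Ioo (0 : ℝ) 1) (hD : 0 ≤ D)
    (ρbar rbar : ℕ → ℝ)
    (h1 : ∀ t : ℕ, 1 ≤ t → ρbar t ≤ 2 * C * rbar t / t)
    (h2 : ∀ t : ℕ, rbar t ≤ (q + 2) * D)
    (h3 : α * D ≤ ρprev) :
    ρbar ⌈2 * C * (q + 2) / (α * β)⌉₊ ≤ β * ρprev ∧
      ∀ τ : ℕ, IsLeast {t : ℕ | 1 ≤ t ∧ ρbar t ≤ β * ρprev} τ →
        τ ≤ ⌈2 * C * (q + 2) / (α * β)⌉₊ := by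
  set tStar := ⌈2 * C * (q + 2) / (α * β)⌉₊
  have hβ0 : 0 < β := hβ.1
  have htStar : 1 ≤ tStar := Nat.one_le_ceil_iff.mpr (by positivity)
  have hrestart : ρbar tStar ≤ β * ρprev :=
    restart_condition_of_length_le hC.le hα hβ0 hD (by exact_mod_cast htStar)
      (h1 tStar htStar) (h2 tStar) h3 (Nat.le_ceil _)
  exact ⟨hrestart, fun τ hτ => hτ.2 ⟨htStar, hrestart⟩⟩

/-- adaptive restart length bound: let `ρbar t` denote the normalized duality
gap `ρ_{‖z̄^{n,t} − z^{n,0}‖}(z̄^{n,t})`, `rbar t = ‖z̄^{n,t} − z^{n,0}‖`,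
`D = dist(z^{n,0}, Z*)`, and `ρprev = ρ_{‖z^{n,0} − z^{n−1,0}‖}(z^{n,0})`. Suppose
`ρbar t ≤ 2C·(rbar t)/t`, `rbar t ≤ (q+2)·D`, and sharpness `α·D ≤ ρprev`. Then at
`t* = ⌈2C(q+2)/(αβ)⌉` the adaptive restart condition `ρbar t* ≤ β·ρprev` holds; consequently
the adaptive restart length `τₙ` (the least such `t`) satisfies `τₙ ≤ t*`. -/
theorem adaptive_restart_length_bound
    (C q α β D ρprev : ℝ) (hC : 0 < C) (hq : 0 ≤ q) (hα : 0 < α)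
    (hβ : β ∈ Set.Ioo (0 : ℝ) 1) (hD : 0 ≤ D)
    (ρbar rbar : ℕ → ℝ) (hrnn : ∀ t, 0 ≤ rbar t)
    (h1 : ∀ t : ℕ, 1 ≤ t → ρbar t ≤ 2 * C * rbar t / t)
    (h2 : ∀ t : ℕ, rbar t ≤ (q + 2) * D)
    (h3 : α * D ≤ ρprev) :
    ρbar ⌈2 * C * (q + 2) / (α * β)⌉₊ ≤ β * ρprev ∧
      ∀ τ : ℕ, IsLeast {t : ℕ | 1 ≤ t ∧ ρbar t ≤ β * ρprev} τ →
        τ ≤ ⌈2 * C * (q + 2) / (α * β)⌉₊ :=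
  adaptive_restart_length_bound_general C q α β D ρprev hC hq hα hβ hD ρbar rbar h1 h2 h3
end

section
/- Adaptive restart linear convergence: under sharpness α·dist(z^{n,0}, Z*) ≤ ρ_{‖z^{n,0}−z^{n−1,0}‖}(z^{n,0}), the restart condition ρ_{‖z^{n,0}−z^{n−1,0}‖}(z^{n,0}) ≤ β·ρ_{‖z^{n−1,0}−z^{n−2,0}‖}(z^{n−1,0}) for n ≥ 2, the algorithmic bounds ρ_{‖z^{1,0}−z^{0,0}‖}(z^{1,0}) ≤ 2C‖z^{1,0}−z^{0,0}‖/τ₀ and ‖z^{1,0}−z^{0,0}‖ ≤ (q+2)·dist(z^{0,0}, Z*), we obtain dist(z^{n,0}, Z*) ≤ βⁿ·(2C(q+2)/(αβτ₀))·dist(z^{0,0}, Z*) for all n ≥ 1. -/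
/-! Sharpness turns the normalized duality gap at each restart point into an upper bound for the
distance to the solution set, and the restart condition makes these gaps decay geometrically with
ratio `β` from the first one. The first gap is controlled by the algorithmic bounds, so
`α · dist(z^{n,0}, Z*) ≤ ρ_n ≤ βⁿ⁻¹ · 2C(q+2) dist(z^{0,0}, Z*) / τ₀`. -/

theorem le_pow_mul_of_le_mul_pred {ρ : ℕ → ℝ} {β : ℝ} (hβ : 0 ≤ β)
    (hρ : ∀ n : ℕ, 2 ≤ n → ρ n ≤ β * ρ (n - 1)) (m : ℕ) : ρ (m + 1) ≤ β ^ m * ρ 1 :=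
  le_geom (u := fun k ↦ ρ (k + 1)) hβ m fun k _ ↦ by simpa using hρ (k + 2) (by omega)

theorem le_pow_mul_of_sharp_of_le_mul_pred {D ρ : ℕ → ℝ} {α β K : ℝ} (hα : 0 < α) (hβ : 0 < β)
    (hsharp : ∀ n : ℕ, 1 ≤ n → α * D n ≤ ρ n)
    (hρ : ∀ n : ℕ, 2 ≤ n → ρ n ≤ β * ρ (n - 1)) (hρ1 : ρ 1 ≤ K) {n : ℕ} (hn : 1 ≤ n) :
    D n ≤ β ^ n * (K / (α * β)) := by
  obtain ⟨m, rfl⟩ := Nat.exists_eq_add_of_le' hn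
  have hαD : α * D (m + 1) ≤ β ^ m * K :=
    (hsharp _ hn).trans <| (le_pow_mul_of_le_mul_pred hβ.le hρ m).trans <|
      mul_le_mul_of_nonneg_left hρ1 (pow_nonneg hβ.le m)
  calc D (m + 1) ≤ β ^ m * K / α := by rwa [le_div_iff₀' hα]
    _ = β ^ (m + 1) * (K / (α * β)) := by field_simp; ring

/-- `D n = dist(z^{n,0}, Z*)`, `ρ n = ρ_{‖z^{n,0}−z^{n−1,0}‖}(z^{n,0})` and `r1 = ‖z^{1,0}−z^{0,0}‖`. -/
theorem adaptive_restart_linear_convergence_general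
    (α C q β : ℝ) (τ0 : ℕ) (hα : 0 < α) (hC : 0 < C)
    (hβ : β ∈ Set.Ioo (0 : ℝ) 1)
    (D ρ : ℕ → ℝ) (r1 : ℝ)
    (hsharp : ∀ n : ℕ, 1 ≤ n → α * D n ≤ ρ n)
    (hrestart : ∀ n : ℕ, 2 ≤ n → ρ n ≤ β * ρ (n - 1))
    (h1 : ρ 1 ≤ 2 * C * r1 / τ0)
    (h2 : r1 ≤ (q + 2) * D 0) :
    ∀ n : ℕ, 1 ≤ n → D n ≤ β ^ n * (2 * C * (q + 2) / (α * β * τ0)) * D 0 := by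
  have hρ1 : ρ 1 ≤ 2 * C * ((q + 2) * D 0) / τ0 := h1.trans (by gcongr)
  intro n hn
  convert le_pow_mul_of_sharp_of_le_mul_pred hα hβ.1 hsharp hrestart hρ1 hn using 1
  ring

/-- adaptive restart linear convergence: with `D n = dist(z^{n,0}, Z*)` and
`ρ n = ρ_{‖z^{n,0}−z^{n−1,0}‖}(z^{n,0})`, sharpness `α·D n ≤ ρ n` for `n ≥ 1`, the restart
condition `ρ n ≤ β·ρ (n−1)` for `n ≥ 2`, and the algorithmic bounds
`ρ 1 ≤ 2C·r₁/τ₀` and `r₁ ≤ (q+2)·D 0` (with `r₁ = ‖z^{1,0}−z^{0,0}‖`), one has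
`D n ≤ βⁿ·(2C(q+2)/(αβτ₀))·D 0` for all `n ≥ 1`. -/
theorem adaptive_restart_linear_convergence
    (α C q β : ℝ) (τ0 : ℕ) (hα : 0 < α) (hC : 0 < C) (hq : 0 ≤ q)
    (hβ : β ∈ Set.Ioo (0 : ℝ) 1) (hτ0 : 1 ≤ τ0)
    (D ρ : ℕ → ℝ) (r1 : ℝ) (hD0 : 0 ≤ D 0)
    (hsharp : ∀ n : ℕ, 1 ≤ n → α * D n ≤ ρ n)
    (hrestart : ∀ n : ℕ, 2 ≤ n → ρ n ≤ β * ρ (n - 1))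
    (h1 : ρ 1 ≤ 2 * C * r1 / τ0)
    (h2 : r1 ≤ (q + 2) * D 0) :
    ∀ n : ℕ, 1 ≤ n → D n ≤ β ^ n * (2 * C * (q + 2) / (α * β * τ0)) * D 0 :=
  adaptive_restart_linear_convergence_general α C q β τ0 hα hC hβ D ρ r1 hsharp hrestart h1 h2
end

section
/- For the PDHG eigenvalues γᵢ^± = 1 − η²σᵢ² ± i·ησᵢ√(1 − η²σᵢ²) with 0 < ησᵢ ≤ 1, one has |1 − γᵢ^±| = ησᵢ, and for every K ∈ ℕ, |1 − (γᵢ^±)^K| ≥ K η²σᵢ²/(2 + K η²σᵢ²). -/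
/-! With `a = ησ`, both eigenvalues have real part `1 - a²` and squared imaginary part
`a²(1 - a²)`, so `‖1 - γ‖ = a` and `‖γ‖ = √(1 - a²)`. The second bound follows from
`‖1 - γ^K‖ ≥ 1 - ‖γ‖^K` and `(1 - a²)^(K/2) ≤ e^(-Ka²/2) ≤ 2 / (2 + Ka²)`. -/

open Complex

theorem Real.rpow_one_sub_le_inv_one_add_mul {a b : ℝ} (ha₀ : 0 ≤ a) (ha₁ : a ≤ 1) (hb : 0 ≤ b) :
    (1 - a) ^ b ≤ (1 + a * b)⁻¹ :=
  calc (1 - a) ^ b ≤ Real.exp (-a) ^ b :=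
        Real.rpow_le_rpow (by linarith) (Real.one_sub_le_exp_neg a) hb
    _ = (Real.exp (a * b))⁻¹ := by rw [← Real.exp_mul, neg_mul, Real.exp_neg]
    _ ≤ (1 + a * b)⁻¹ :=
        inv_anti₀ (by positivity) (by linarith [Real.add_one_le_exp (a * b)])

theorem Real.sqrt_one_sub_pow_le {t : ℝ} (ht₀ : 0 ≤ t) (ht₁ : t ≤ 1) (K : ℕ) :
    √(1 - t) ^ K ≤ 2 / (2 + K * t) := by
  have h := Real.rpow_one_sub_le_inv_one_add_mul ht₀ ht₁ (by positivity : (0 : ℝ) ≤ 1 / 2 * K)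
  rwa [Real.rpow_mul (by linarith), ← Real.sqrt_eq_rpow, Real.rpow_natCast,
    show (1 + t * (1 / 2 * K))⁻¹ = 2 / (2 + K * t) by field_simp] at h

theorem norm_one_sub_eq_of_re_of_im_sq {a : ℝ} {γ : ℂ} (hre : γ.re = 1 - a ^ 2)
    (him : γ.im ^ 2 = a ^ 2 * (1 - a ^ 2)) (ha : 0 ≤ a) : ‖1 - γ‖ = a := by
  rw [← pow_left_inj₀ (norm_nonneg _) ha two_ne_zero, Complex.sq_norm, Complex.normSq_apply]
  simp only [sub_re, one_re, sub_im, one_im, hre]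
  linear_combination him

theorem norm_eq_sqrt_of_re_of_im_sq {a : ℝ} {γ : ℂ} (hre : γ.re = 1 - a ^ 2)
    (him : γ.im ^ 2 = a ^ 2 * (1 - a ^ 2)) :
    ‖γ‖ = √(1 - a ^ 2) := by
  rw [Complex.norm_def, Complex.normSq_apply, hre]
  congr 1
  linear_combination him

theorem div_le_norm_one_sub_pow_of_re_of_im_sq {a : ℝ} {γ : ℂ} (hre : γ.re = 1 - a ^ 2)
    (him : γ.im ^ 2 = a ^ 2 * (1 - a ^ 2)) (ha₀ : 0 ≤ a) (ha₁ : a ≤ 1) (K : ℕ) :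
    K * a ^ 2 / (2 + K * a ^ 2) ≤ ‖1 - γ ^ K‖ := by
  have hpos : 0 < 2 + K * a ^ 2 := by positivity
  calc K * a ^ 2 / (2 + K * a ^ 2) = 1 - 2 / (2 + K * a ^ 2) := by field_simp; ring
    _ ≤ 1 - ‖γ‖ ^ K := by
        rw [norm_eq_sqrt_of_re_of_im_sq hre him]
        gcongr
        exact Real.sqrt_one_sub_pow_le (by positivity) (pow_le_one₀ ha₀ ha₁) K
    _ ≤ ‖1 - γ ^ K‖ := by simpa only [norm_one, norm_pow] using norm_sub_norm_le (1 : ℂ) (γ ^ K)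

/-- for the PDHG eigenvalues `γ± = 1 − η²σ² ± i·ησ·√(1 − η²σ²)` with
`0 < ησ ≤ 1`, one has `|1 − γ±| = ησ`, and for every `K ∈ ℕ`,
`|1 − (γ±)^K| ≥ Kη²σ²/(2 + Kη²σ²)`. -/
theorem pdhg_eigenvalue_bounds (η σ : ℝ) (hη : 0 < η) (hσ : 0 < σ) (h : η * σ ≤ 1) :
    ∀ γ ∈ ({((1 - η ^ 2 * σ ^ 2 : ℝ) : ℂ) +
              Complex.I * ((η * σ * Real.sqrt (1 - η ^ 2 * σ ^ 2) : ℝ) : ℂ),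
            ((1 - η ^ 2 * σ ^ 2 : ℝ) : ℂ) -
              Complex.I * ((η * σ * Real.sqrt (1 - η ^ 2 * σ ^ 2) : ℝ) : ℂ)} : Set ℂ),
      ‖1 - γ‖ = η * σ ∧
        ∀ K : ℕ, (K : ℝ) * η ^ 2 * σ ^ 2 / (2 + (K : ℝ) * η ^ 2 * σ ^ 2) ≤
          ‖1 - γ ^ K‖ := by
  intro γ hγ
  have ha₀ : 0 ≤ η * σ := (mul_pos hη hσ).le
  have hsq : √(1 - (η * σ) ^ 2) ^ 2 = 1 - (η * σ) ^ 2 := Real.sq_sqrt (by nlinarith)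
  simp only [← mul_pow] at hγ
  obtain ⟨hre, him⟩ : γ.re = 1 - (η * σ) ^ 2 ∧ γ.im ^ 2 = (η * σ) ^ 2 * (1 - (η * σ) ^ 2) := by
    rcases hγ with rfl | rfl <;>
      simp only [add_re, sub_re, add_im, sub_im, mul_re, mul_im, ofReal_re, ofReal_im, I_re, I_im] <;>
      exact ⟨by ring, by linear_combination (η * σ) ^ 2 * hsq⟩
  refine ⟨norm_one_sub_eq_of_re_of_im_sq hre him ha₀, fun K => ?_⟩
  convert div_le_norm_one_sub_pow_of_re_of_im_sq hre him ha₀ h K using 2 <;> ring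
end

section
/- KKT error bounded by normalized duality gap for LP: consider L(x,y) = cᵀx + bᵀy − yᵀAx on Z = {x ≥ 0} × ℝᵐ with the Euclidean norm, K the stacked KKT matrix with rows [I, 0], [−A, 0], [A, 0], [0, −Aᵀ], [−cᵀ, bᵀ] and h = (0, −b, b, −c, 0). Suppose a saddle point exists. Then for all R > 0, r ∈ (0, R], and z = (x,y) ∈ Z with ‖z‖ ≤ R: ‖(h − Kz)⁺‖₂ ≤ ρ_r(z)·√(1 + R²). -/
/-!
Write `z = (x, y)` and `g = (Aᵀy − c, b − Ax)`. Expanding `L`, the gap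
`L(x, y') − L(x', y)` at `w = (x', y')` equals `⟪g, w − z⟫`. Stepping from `z` a distance `r`
along `v = ((Aᵀy − c)⁺, b − Ax)` stays in `Z` (as `x ≥ 0`) and produces the gap `r‖v‖`, so
`‖v‖ ≤ ρ_r(z)`; shrinking `z` to `(1 − r/R) z` produces the gap `(r/R)(cᵀx − bᵀy)`, so
`(cᵀx − bᵀy)⁺ ≤ R ρ_r(z)`. Squaring and adding the two bounds gives the claim.
-/

open scoped RealInnerProductSpace Matrix

/-- Componentwise positive part of a Euclidean vector. -/
noncomputable def posPart {k : ℕ} (v : EuclideanSpace ℝ (Fin k)) :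
    EuclideanSpace ℝ (Fin k) :=
  (EuclideanSpace.equiv (Fin k) ℝ).symm fun i => max (v i) 0

open Matrix

lemma inner_posPart_self {k : ℕ} (u : EuclideanSpace ℝ (Fin k)) :
    ⟪u, posPart u⟫ = ‖posPart u‖ ^ 2 := by
  rw [← real_inner_self_eq_norm_sq]
  refine Finset.sum_congr rfl fun i _ => ?_
  show max (u i) 0 * u i = max (u i) 0 * max (u i) 0
  rcases le_total (u i) 0 with h | h <;> simp [h]

lemma inner_toEuclideanLin {n m : ℕ} (A : Matrix (Fin m) (Fin n) ℝ)
    (x : EuclideanSpace ℝ (Fin n)) (y : EuclideanSpace ℝ (Fin m)) :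
    ⟪y, toEuclideanLin A x⟫ = ⟪toEuclideanLin Aᵀ y, x⟫ := by
  rw [← conjTranspose_eq_transpose_of_trivial, toEuclideanLin_conjTranspose_eq_adjoint,
    LinearMap.adjoint_inner_left]

section PrimalDual

variable {n m : ℕ}

@[simp] lemma xPart_toLp (x : EuclideanSpace ℝ (Fin n)) (y : EuclideanSpace ℝ (Fin m)) :
    xPart (WithLp.toLp 2 (x, y)) = x := rfl

@[simp] lemma yPart_toLp (x : EuclideanSpace ℝ (Fin n)) (y : EuclideanSpace ℝ (Fin m)) :
    yPart (WithLp.toLp 2 (x, y)) = y := rfl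

lemma inner_eq_inner_xPart_add_inner_yPart (z w : PDSpace n m) :
    ⟪z, w⟫ = ⟪xPart z, xPart w⟫ + ⟪yPart z, yPart w⟫ := rfl

def primalNonneg (n m : ℕ) : Set (PDSpace n m) :=
  {z | ∀ i, 0 ≤ xPart z i}

noncomputable def normalizedDualityGap
    (L : EuclideanSpace ℝ (Fin n) → EuclideanSpace ℝ (Fin m) → ℝ) (Z : Set (PDSpace n m))
    (r : ℝ) (z : PDSpace n m) : ℝ :=
  (1 / r) * sSup ((fun w : PDSpace n m => L (xPart z) (yPart w) - L (xPart w) (yPart z)) ''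
    {w | w ∈ Z ∧ ‖w - z‖ ≤ r})

lemma le_mul_normalizedDualityGap {L : EuclideanSpace ℝ (Fin n) → EuclideanSpace ℝ (Fin m) → ℝ}
    {Z : Set (PDSpace n m)} {r : ℝ} {z w : PDSpace n m}
    (hL : Continuous fun w : PDSpace n m => L (xPart z) (yPart w) - L (xPart w) (yPart z))
    (hr : 0 < r) (hw : w ∈ Z) (hwz : ‖w - z‖ ≤ r) :
    L (xPart z) (yPart w) - L (xPart w) (yPart z) ≤ r * normalizedDualityGap L Z r z := by
  have hball : {w | w ∈ Z ∧ ‖w - z‖ ≤ r} ⊆ Metric.closedBall z r := fun w hw => by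
    simpa [dist_eq_norm] using hw.2
  have hbdd := ((isCompact_closedBall z r).bddAbove_image hL.continuousOn).mono
    (Set.image_mono hball)
  rw [normalizedDualityGap, ← mul_assoc, mul_one_div_cancel hr.ne', one_mul]
  exact le_csSup hbdd ⟨w, ⟨hw, hwz⟩, rfl⟩

lemma normalizedDualityGap_nonneg
    {L : EuclideanSpace ℝ (Fin n) → EuclideanSpace ℝ (Fin m) → ℝ}
    {Z : Set (PDSpace n m)} {r : ℝ} {z : PDSpace n m}
    (hL : Continuous fun w : PDSpace n m => L (xPart z) (yPart w) - L (xPart w) (yPart z))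
    (hr : 0 < r) (hz : z ∈ Z) : 0 ≤ normalizedDualityGap L Z r z := by
  have := le_mul_normalizedDualityGap hL hr hz (by simpa using hr.le)
  rw [sub_self] at this
  exact nonneg_of_mul_nonneg_right this hr

end PrimalDual

section LP

variable {n m : ℕ} (A : Matrix (Fin m) (Fin n) ℝ) (b : EuclideanSpace ℝ (Fin m))
  (c : EuclideanSpace ℝ (Fin n))

noncomputable def lpLagrangian (x : EuclideanSpace ℝ (Fin n)) (y : EuclideanSpace ℝ (Fin m)) :
    ℝ :=
  ⟪c, x⟫ + ⟪b, y⟫ - ⟪y, toEuclideanLin A x⟫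

noncomputable def lpGapGradient (z : PDSpace n m) : PDSpace n m :=
  WithLp.toLp 2 (toEuclideanLin Aᵀ (yPart z) - c, b - toEuclideanLin A (xPart z))

lemma lpLagrangian_sub_lpLagrangian_eq_inner (z w : PDSpace n m) :
    lpLagrangian A b c (xPart z) (yPart w) - lpLagrangian A b c (xPart w) (yPart z) =
      ⟪lpGapGradient A b c z, w - z⟫ := by
  simp only [lpLagrangian, lpGapGradient, inner_eq_inner_xPart_add_inner_yPart, xPart_toLp,
    yPart_toLp, inner_sub_left, inner_sub_right,
    real_inner_comm _ (toEuclideanLin A _), inner_toEuclideanLin]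
  ring

noncomputable def lpInfeasibility (z : PDSpace n m) : PDSpace n m :=
  WithLp.toLp 2 (posPart (toEuclideanLin Aᵀ (yPart z) - c), b - toEuclideanLin A (xPart z))

lemma norm_lpInfeasibility_sq (z : PDSpace n m) :
    ‖lpInfeasibility A b c z‖ ^ 2 =
      ‖posPart (toEuclideanLin Aᵀ (yPart z) - c)‖ ^ 2 + ‖b - toEuclideanLin A (xPart z)‖ ^ 2 :=
  WithLp.prod_norm_sq_eq_of_L2 _

lemma inner_lpGapGradient_lpInfeasibility (z : PDSpace n m) :
    ⟪lpGapGradient A b c z, lpInfeasibility A b c z⟫ = ‖lpInfeasibility A b c z‖ ^ 2 := by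
  rw [inner_eq_inner_xPart_add_inner_yPart, norm_lpInfeasibility_sq]
  exact congrArg₂ (· + ·) (inner_posPart_self _) (real_inner_self_eq_norm_sq _)

lemma inner_lpGapGradient_self (z : PDSpace n m) :
    ⟪lpGapGradient A b c z, z⟫ = ⟪b, yPart z⟫ - ⟪c, xPart z⟫ := by
  simp only [lpGapGradient, inner_eq_inner_xPart_add_inner_yPart, xPart_toLp, yPart_toLp,
    inner_sub_left, real_inner_comm _ (toEuclideanLin A _), inner_toEuclideanLin]
  ring

lemma continuous_lpLagrangian_sub_lpLagrangian (z : PDSpace n m) :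
    Continuous fun w : PDSpace n m =>
      lpLagrangian A b c (xPart z) (yPart w) - lpLagrangian A b c (xPart w) (yPart z) := by
  simp_rw [lpLagrangian_sub_lpLagrangian_eq_inner]
  fun_prop

lemma norm_lpInfeasibility_le_normalizedDualityGap {r : ℝ} {z : PDSpace n m} (hr : 0 < r)
    (hz : z ∈ primalNonneg n m) :
    ‖lpInfeasibility A b c z‖ ≤
      normalizedDualityGap (lpLagrangian A b c) (primalNonneg n m) r z := by
  set v := lpInfeasibility A b c z
  have hgap := continuous_lpLagrangian_sub_lpLagrangian A b c z
  rcases (norm_nonneg v).eq_or_lt with hv | hv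
  · exact hv ▸ normalizedDualityGap_nonneg hgap hr hz
  set t := r / ‖v‖
  have ht : 0 < t := div_pos hr hv
  have hw : z + t • v ∈ primalNonneg n m := fun i =>
    add_nonneg (hz i) (mul_nonneg ht.le (le_max_right _ _))
  have hwz : ‖z + t • v - z‖ = r := by
    rw [add_sub_cancel_left, norm_smul, Real.norm_of_nonneg ht.le, div_mul_cancel₀ _ hv.ne']
  have := le_mul_normalizedDualityGap hgap hr hw hwz.le
  rw [lpLagrangian_sub_lpLagrangian_eq_inner, add_sub_cancel_left, inner_smul_right,
    inner_lpGapGradient_lpInfeasibility] at this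
  have key : t * ‖v‖ ^ 2 = r * ‖v‖ := by
    rw [sq, ← mul_assoc, div_mul_cancel₀ _ hv.ne']
  exact le_of_mul_le_mul_left (key ▸ this) hr

lemma dualityGap_le_mul_normalizedDualityGap {R r : ℝ} {z : PDSpace n m} (hr : 0 < r)
    (hrR : r ≤ R) (hz : z ∈ primalNonneg n m) (hzR : ‖z‖ ≤ R) :
    ⟪c, xPart z⟫ - ⟪b, yPart z⟫ ≤
      R * normalizedDualityGap (lpLagrangian A b c) (primalNonneg n m) r z := by
  have hR : 0 < R := hr.trans_le hrR
  have ht : 0 < r / R := div_pos hr hR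
  have hw : z - (r / R) • z ∈ primalNonneg n m := fun i =>
    sub_nonneg.2 (mul_le_of_le_one_left (hz i) ((div_le_one hR).2 hrR))
  have hwz : ‖z - (r / R) • z - z‖ ≤ r := by
    rw [sub_sub_cancel_left, norm_neg, norm_smul, Real.norm_of_nonneg ht.le]
    calc r / R * ‖z‖ ≤ r / R * R := by gcongr
      _ = r := div_mul_cancel₀ _ hR.ne'
  have := le_mul_normalizedDualityGap (continuous_lpLagrangian_sub_lpLagrangian A b c z)
    hr hw hwz
  rw [lpLagrangian_sub_lpLagrangian_eq_inner, sub_sub_cancel_left, inner_neg_right,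
    inner_smul_right, inner_lpGapGradient_self, ← mul_neg, neg_sub] at this
  calc ⟪c, xPart z⟫ - ⟪b, yPart z⟫ = R / r * (r / R * (⟪c, xPart z⟫ - ⟪b, yPart z⟫)) := by
        field_simp
    _ ≤ R / r * (r * normalizedDualityGap (lpLagrangian A b c) (primalNonneg n m) r z) := by
        gcongr
    _ = R * normalizedDualityGap (lpLagrangian A b c) (primalNonneg n m) r z := by
        field_simp

end LP

lemma sqrt_sq_add_le_mul_sqrt_one_add_sq {a q ρ R : ℝ} (hρ : 0 ≤ ρ) (ha : 0 ≤ a)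
    (haR : a ≤ R * ρ) (hq : q ≤ ρ ^ 2) : √(a ^ 2 + q) ≤ ρ * √(1 + R ^ 2) := by
  rw [← Real.sqrt_sq hρ, ← Real.sqrt_mul (sq_nonneg ρ)]
  gcongr
  nlinarith [mul_self_le_mul_self ha haR]

theorem lp_kkt_error_le_normalized_duality_gap_general {n m : ℕ}
    (A : Matrix (Fin m) (Fin n) ℝ)
    (b : EuclideanSpace ℝ (Fin m)) (c : EuclideanSpace ℝ (Fin n))
    (L : EuclideanSpace ℝ (Fin n) → EuclideanSpace ℝ (Fin m) → ℝ)
    (hL : ∀ x y, L x y = ⟪c, x⟫ + ⟪b, y⟫ - ⟪y, Matrix.toEuclideanLin A x⟫)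
    (Z : Set (PDSpace n m)) (hZ : Z = {z | ∀ i, 0 ≤ xPart z i})
    (R r : ℝ) (hr : r ∈ Set.Ioc 0 R)
    (z : PDSpace n m) (hzZ : z ∈ Z) (hzR : ‖z‖ ≤ R) :
    Real.sqrt ((max (⟪c, xPart z⟫ - ⟪b, yPart z⟫) 0) ^ 2 +
        ‖posPart (Matrix.toEuclideanLin Aᵀ (yPart z) - c)‖ ^ 2 +
        ‖Matrix.toEuclideanLin A (xPart z) - b‖ ^ 2) ≤
      ((1 / r) * sSup ((fun w : PDSpace n m =>
            L (xPart z) (yPart w) - L (xPart w) (yPart z)) ''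
          {w | w ∈ Z ∧ ‖w - z‖ ≤ r})) * Real.sqrt (1 + R ^ 2) := by
  obtain ⟨hr, hrR⟩ := hr
  obtain rfl : L = lpLagrangian A b c := funext₂ hL
  obtain rfl : Z = primalNonneg n m := hZ
  have hρ :=
    normalizedDualityGap_nonneg (continuous_lpLagrangian_sub_lpLagrangian A b c z) hr hzZ
  have hgap := dualityGap_le_mul_normalizedDualityGap A b c hr hrR hzZ hzR
  have hinf := norm_lpInfeasibility_le_normalizedDualityGap A b c hr hzZ
  rw [add_assoc, norm_sub_rev (toEuclideanLin A _), ← norm_lpInfeasibility_sq]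
  exact sqrt_sq_add_le_mul_sqrt_one_add_sq hρ (le_max_right _ _)
    (max_le hgap (mul_nonneg (hr.le.trans hrR) hρ)) (pow_le_pow_left₀ (norm_nonneg _) hinf 2)

/-- KKT error bounded by normalized duality gap for LP: for
`L(x,y) = cᵀx + bᵀy − yᵀAx` on `Z = {x ≥ 0} × ℝᵐ` (Euclidean norm), if a saddle point
exists, then for all `R > 0`, `r ∈ (0, R]` and `z ∈ Z` with `‖z‖ ≤ R`,
`‖(h − Kz)⁺‖₂ ≤ ρ_r(z)·√(1 + R²)`, where for `z ∈ Z` (so `x ≥ 0`) the KKT residual is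
`‖(h − Kz)⁺‖₂² = ((cᵀx − bᵀy)⁺)² + ‖(Aᵀy − c)⁺‖₂² + ‖Ax − b‖₂²`. -/
theorem lp_kkt_error_le_normalized_duality_gap {n m : ℕ}
    (A : Matrix (Fin m) (Fin n) ℝ)
    (b : EuclideanSpace ℝ (Fin m)) (c : EuclideanSpace ℝ (Fin n))
    (L : EuclideanSpace ℝ (Fin n) → EuclideanSpace ℝ (Fin m) → ℝ)
    (hL : ∀ x y, L x y = ⟪c, x⟫ + ⟪b, y⟫ - ⟪y, Matrix.toEuclideanLin A x⟫)
    (Z : Set (PDSpace n m)) (hZ : Z = {z | ∀ i, 0 ≤ xPart z i})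
    (hsaddle : ∃ zs ∈ Z, ∀ z ∈ Z,
      L (xPart zs) (yPart z) ≤ L (xPart zs) (yPart zs) ∧
        L (xPart zs) (yPart zs) ≤ L (xPart z) (yPart zs))
    (R r : ℝ) (hR : 0 < R) (hr : r ∈ Set.Ioc 0 R)
    (z : PDSpace n m) (hzZ : z ∈ Z) (hzR : ‖z‖ ≤ R) :
    Real.sqrt ((max (⟪c, xPart z⟫ - ⟪b, yPart z⟫) 0) ^ 2 +
        ‖posPart (Matrix.toEuclideanLin Aᵀ (yPart z) - c)‖ ^ 2 +
        ‖Matrix.toEuclideanLin A (xPart z) - b‖ ^ 2) ≤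
      ((1 / r) * sSup ((fun w : PDSpace n m =>
            L (xPart z) (yPart w) - L (xPart w) (yPart z)) ''
          {w | w ∈ Z ∧ ‖w - z‖ ≤ r})) * Real.sqrt (1 + R ^ 2) :=
  lp_kkt_error_le_normalized_duality_gap_general A b c L hL Z hZ R r hr z hzZ hzR
end
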